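/- Let X, A ∈ ℝ^{d×n} and τ > 0. If X* = S_τ(A) is the singular value thresholding of A, then 0 ∈ τ·∂‖X*‖_* + X* − A, i.e., X* satisfies the stationarity equation τ G + X* − A = 0 for some subgradient G ∈ ∂‖X*‖_*. -/

import Mathlib

/-!
Take `G = U diag(gᵢ) Vᵀ` with `gᵢ = min(σᵢ, τ)/τ ∈ [0, 1]`. Then `τgᵢ = σᵢ − max(σᵢ − τ, 0)`,
so `τG = A − X*`; moreover `‖G‖₂ ≤ 1` and
`⟨G, X*⟩ = Σ gᵢ max(σᵢ − τ, 0) = Σ max(σᵢ − τ, 0) = ‖X*‖_*`, where the last equality matches the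
eigenvalues of `X*ᵀX* = V diag(max(σᵢ − τ, 0)²) Vᵀ` with the diagonal through the characteristic
polynomial.
The subgradient inequality then follows from the duality `⟨G, Y⟩ ≤ ‖G‖₂ ‖Y‖_*`, obtained by
evaluating the trace of `GᵀY` in an orthonormal eigenbasis `(wⱼ)` of `YᵀY`, where `‖Y wⱼ‖ = √λⱼ`.
-/

open Matrix

/-- The nuclear norm of a matrix: the sum of its singular values, i.e. the sum of the
square roots of the eigenvalues of XᴴX. -/
noncomputable def nuclearNorm {d n : ℕ} (X : Matrix (Fin d) (Fin n) ℝ) : ℝ :=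
  ∑ i, Real.sqrt ((Matrix.isHermitian_conjTranspose_mul_self X).eigenvalues i)

open scoped Matrix.Norms.L2Operator

namespace Matrix

variable {ι m n : Type*} [Fintype m] [Fintype n] [DecidableEq n]

lemma trace_eq_sum_dotProduct_orthonormalBasis [Fintype ι] (M : Matrix n n ℝ)
    (b : OrthonormalBasis ι ℝ (EuclideanSpace ℝ n)) :
    M.trace = ∑ i, b i ⬝ᵥ (M *ᵥ b i) := by
  have h := LinearMap.trace_eq_sum_inner (toEuclideanLin M) b
  rw [toEuclideanLin_eq_toLin_orthonormal, trace_toLin_eq] at h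
  rw [h]
  simp [EuclideanSpace.inner_eq_star_dotProduct, ← toEuclideanLin_eq_toLin_orthonormal,
    dotProduct_comm]

lemma norm_mulVec_eigenvectorBasis_conjTranspose_mul_self (Y : Matrix m n ℝ) (j : n) :
    ‖(EuclideanSpace.equiv m ℝ).symm
        (Y *ᵥ (isHermitian_conjTranspose_mul_self Y).eigenvectorBasis j)‖ =
      √((isHermitian_conjTranspose_mul_self Y).eigenvalues j) := by
  rw [IsHermitian.eigenvalues_eq, ← Real.sqrt_sq (norm_nonneg _), ← real_inner_self_eq_norm_sq,
    EuclideanSpace.inner_eq_star_dotProduct]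
  simp [conjTranspose_eq_transpose_of_trivial, ← mulVec_mulVec, dotProduct_mulVec,
    vecMul_transpose]

lemma IsHermitian.sum_comp_eigenvalues_eq_of_charpoly_eq {H : Matrix n n ℝ} (hH : H.IsHermitian)
    {v : n → ℝ} (h : H.charpoly = (diagonal v).charpoly) (f : ℝ → ℝ) :
    ∑ i, f (hH.eigenvalues i) = ∑ i, f (v i) := by
  have hroots := hH.roots_charpoly_eq_eigenvalues
  rw [h, charpoly_diagonal, Polynomial.roots_prod _ _ (Finset.prod_ne_zero_iff.2 fun i _ =>
    Polynomial.X_sub_C_ne_zero (v i))] at hroots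
  simp only [Polynomial.roots_X_sub_C, Multiset.bind_singleton] at hroots
  have hsum := congrArg (fun s => (s.map f).sum) hroots
  simp only [Multiset.map_map] at hsum
  exact hsum.symm

lemma l2_opNorm_le_one_of_transpose_mul_self_eq_one {A : Matrix m n ℝ} (hA : Aᵀ * A = 1) :
    ‖A‖ ≤ 1 := by
  have h := l2_opNorm_conjTranspose_mul_self A
  rw [conjTranspose_eq_transpose_of_trivial, hA, ← diagonal_one, l2_opNorm_diagonal] at h
  have h1 : ‖fun _ : n => (1 : ℝ)‖ ≤ 1 :=
    (pi_norm_le_iff_of_nonneg zero_le_one).2 fun _ => by simp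
  nlinarith [norm_nonneg A]

lemma l2_opNorm_mul_diagonal_mul_transpose_le_one {U : Matrix m n ℝ} {V : Matrix n n ℝ}
    (hU : Uᵀ * U = 1) (hV : Vᵀ * V = 1) {s : n → ℝ} (hs : ∀ i, |s i| ≤ 1) :
    ‖U * diagonal s * Vᵀ‖ ≤ 1 := by
  have hVt : Vᵀᵀ * Vᵀ = 1 := by rw [transpose_transpose]; exact mul_eq_one_comm.mp hV
  have hD : ‖diagonal s‖ ≤ 1 := by
    rw [l2_opNorm_diagonal]
    exact (pi_norm_le_iff_of_nonneg zero_le_one).2 fun i => by simpa using hs i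
  calc ‖U * diagonal s * Vᵀ‖ ≤ ‖U‖ * ‖diagonal s‖ * ‖Vᵀ‖ :=
        (l2_opNorm_mul _ _).trans (by gcongr; exact l2_opNorm_mul _ _)
    _ ≤ 1 * 1 * 1 := by
        gcongr
        exacts [l2_opNorm_le_one_of_transpose_mul_self_eq_one hU,
          l2_opNorm_le_one_of_transpose_mul_self_eq_one hVt]
    _ = 1 := by norm_num

lemma trace_transpose_mul_of_mul_diagonal_mul_transpose {U : Matrix m n ℝ} {V : Matrix n n ℝ}
    (hU : Uᵀ * U = 1) (hV : Vᵀ * V = 1) (a b : n → ℝ) :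
    ((U * diagonal a * Vᵀ)ᵀ * (U * diagonal b * Vᵀ)).trace = ∑ i, a i * b i := by
  simp only [transpose_mul, transpose_transpose, diagonal_transpose]
  calc (V * (diagonal a * Uᵀ) * (U * diagonal b * Vᵀ)).trace
      = (V * (diagonal a * (Uᵀ * U) * diagonal b * Vᵀ)).trace := by simp only [Matrix.mul_assoc]
    _ = (diagonal (fun i => a i * b i) * (Vᵀ * V)).trace := by
        rw [hU, Matrix.mul_one, diagonal_mul_diagonal, trace_mul_comm, Matrix.mul_assoc]
    _ = ∑ i, a i * b i := by rw [hV, Matrix.mul_one, trace_diagonal]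

end Matrix

lemma trace_transpose_mul_le_l2_opNorm_mul_nuclearNorm {d k : ℕ}
    (G Y : Matrix (Fin d) (Fin k) ℝ) : (Gᵀ * Y).trace ≤ ‖G‖ * nuclearNorm Y := by
  set b := (isHermitian_conjTranspose_mul_self Y).eigenvectorBasis
  let e := (EuclideanSpace.equiv (Fin d) ℝ).symm
  have hterm : ∀ j, b j ⬝ᵥ ((Gᵀ * Y) *ᵥ b j) = inner ℝ (e (G *ᵥ b j)) (e (Y *ᵥ b j)) := by
    intro j
    simp [e, EuclideanSpace.inner_eq_star_dotProduct, ← mulVec_mulVec, dotProduct_mulVec,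
      vecMul_transpose, dotProduct_comm]
  rw [trace_eq_sum_dotProduct_orthonormalBasis _ b, nuclearNorm, Finset.mul_sum]
  refine Finset.sum_le_sum fun j _ => ?_
  calc b j ⬝ᵥ ((Gᵀ * Y) *ᵥ b j) ≤ ‖e (G *ᵥ b j)‖ * ‖e (Y *ᵥ b j)‖ :=
        hterm j ▸ real_inner_le_norm _ _
    _ ≤ ‖G‖ * √((isHermitian_conjTranspose_mul_self Y).eigenvalues j) := by
        rw [norm_mulVec_eigenvectorBasis_conjTranspose_mul_self]
        gcongr
        simpa [e, b.orthonormal.1 j] using l2_opNorm_mulVec G (b j)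

lemma nuclearNorm_mul_diagonal_mul_transpose {d k : ℕ} {U : Matrix (Fin d) (Fin k) ℝ}
    {V : Matrix (Fin k) (Fin k) ℝ} (hU : Uᵀ * U = 1) (hV : Vᵀ * V = 1) {s : Fin k → ℝ}
    (hs : ∀ i, 0 ≤ s i) : nuclearNorm (U * diagonal s * Vᵀ) = ∑ i, s i := by
  have hgram : (U * diagonal s * Vᵀ)ᴴ * (U * diagonal s * Vᵀ) =
      V * (diagonal (fun i => s i * s i) * Vᵀ) := by
    simp only [conjTranspose_eq_transpose_of_trivial, transpose_mul, transpose_transpose,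
      diagonal_transpose]
    calc V * (diagonal s * Uᵀ) * (U * diagonal s * Vᵀ)
        = V * (diagonal s * (Uᵀ * U) * diagonal s * Vᵀ) := by simp only [Matrix.mul_assoc]
      _ = _ := by rw [hU, Matrix.mul_one, diagonal_mul_diagonal]
  have hcharpoly : ((U * diagonal s * Vᵀ)ᴴ * (U * diagonal s * Vᵀ)).charpoly =
      (diagonal (fun i => s i * s i)).charpoly := by
    rw [hgram, charpoly_mul_comm, Matrix.mul_assoc, hV, Matrix.mul_one]
  rw [nuclearNorm, IsHermitian.sum_comp_eigenvalues_eq_of_charpoly_eq _ hcharpoly]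
  exact Finset.sum_congr rfl fun i _ => Real.sqrt_mul_self (hs i)

lemma nuclearNorm_nonneg {d k : ℕ} (X : Matrix (Fin d) (Fin k) ℝ) : 0 ≤ nuclearNorm X :=
  Finset.sum_nonneg fun _ _ => Real.sqrt_nonneg _

lemma nuclearNorm_add_sum_mul_sub_le {d k : ℕ} {G X : Matrix (Fin d) (Fin k) ℝ}
    (hG : ‖G‖ ≤ 1) (hGX : (Gᵀ * X).trace = nuclearNorm X) (Y : Matrix (Fin d) (Fin k) ℝ) :
    nuclearNorm X + ∑ i, ∑ j, G i j * (Y - X) i j ≤ nuclearNorm Y := by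
  have hsum : ∑ i, ∑ j, G i j * (Y - X) i j = (Gᵀ * Y).trace - (Gᵀ * X).trace := by
    rw [← trace_sub, ← Matrix.mul_sub]
    simp only [trace, diag_apply, mul_apply, transpose_apply]
    exact Finset.sum_comm
  rw [hsum, hGX, add_sub_cancel]
  calc (Gᵀ * Y).trace ≤ ‖G‖ * nuclearNorm Y :=
        trace_transpose_mul_le_l2_opNorm_mul_nuclearNorm G Y
    _ ≤ nuclearNorm Y := mul_le_of_le_one_left (nuclearNorm_nonneg Y) hG

/-- if X* = S_τ(A) = U diag(max(σᵢ−τ,0)) Vᵀ is the singular value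
thresholding of A = U diag(σ) Vᵀ, then 0 ∈ τ∂‖X*‖_* + X* − A: there is a subgradient
G of the nuclear norm at X* with τG + X* − A = 0. -/
theorem stmt17 {d n : ℕ} (τ : ℝ) (hτ : 0 < τ)
    (A : Matrix (Fin d) (Fin n) ℝ)
    (U : Matrix (Fin d) (Fin n) ℝ) (V : Matrix (Fin n) (Fin n) ℝ)
    (σ : Fin n → ℝ) (hσ : ∀ i, 0 ≤ σ i)
    (hU : Uᵀ * U = 1) (hV : Vᵀ * V = 1)
    (hA : A = U * Matrix.diagonal σ * Vᵀ)
    (Xstar : Matrix (Fin d) (Fin n) ℝ)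
    (hX : Xstar = U * Matrix.diagonal (fun i => max (σ i - τ) 0) * Vᵀ) :
    ∃ G : Matrix (Fin d) (Fin n) ℝ,
      (∀ Y : Matrix (Fin d) (Fin n) ℝ,
        nuclearNorm Xstar + ∑ i, ∑ j, G i j * (Y - Xstar) i j ≤ nuclearNorm Y) ∧
      τ • G + Xstar - A = 0 := by
  set s : Fin n → ℝ := fun i => max (σ i - τ) 0
  set g : Fin n → ℝ := fun i => min (σ i) τ / τ
  have hg_abs : ∀ i, |g i| ≤ 1 := fun i => by
    rw [abs_le, le_div_iff₀ hτ, div_le_one hτ]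
    exact ⟨by linarith [le_min (hσ i) hτ.le], min_le_right _ _⟩
  have hgs : ∀ i, g i * s i = s i := fun i => by
    rcases le_total (σ i) τ with h | h
    · simp [s, h]
    · simp [g, s, h, hτ.ne']
  have hτgs : ∀ i, τ * g i + s i - σ i = 0 := fun i => by
    rcases le_total (σ i) τ with h | h <;> simp [g, s, h, mul_div_cancel₀ _ hτ.ne']
  refine ⟨U * diagonal g * Vᵀ, fun Y => ?_, ?_⟩
  · refine nuclearNorm_add_sum_mul_sub_le
      (l2_opNorm_mul_diagonal_mul_transpose_le_one hU hV hg_abs) ?_ Y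
    rw [hX, trace_transpose_mul_of_mul_diagonal_mul_transpose hU hV,
      nuclearNorm_mul_diagonal_mul_transpose hU hV fun i => le_max_right _ _]
    exact Finset.sum_congr rfl fun i _ => hgs i
  · have hdiag : τ • diagonal g + diagonal s - diagonal σ = 0 := by
      rw [← diagonal_smul, diagonal_add, diagonal_sub, ← diagonal_zero]
      exact congrArg diagonal (funext hτgs)
    rw [hA, hX, ← Matrix.smul_mul, ← Matrix.mul_smul, ← Matrix.add_mul, ← Matrix.mul_add,
      ← Matrix.sub_mul, ← Matrix.mul_sub, hdiag, Matrix.mul_zero, Matrix.zero_mul]
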